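/- arXiv:2306.12841 — 2 statements merged into one kernel-verified Lean document; each statement's English description precedes it below -/
import Mathlib

section
/- Under this setup, for every k ≥ 0 with ∑_{l=0}^k γ_l > 0, the iterates satisfy the convergence guarantee 𝔼[min_{0≤l≤k} ‖∇F(θ_l)‖²] ≤ 2(F(θ_0) − F*) / (2 μ_m ∑_{l=0}^k γ_l) + μ_M² C L ∑_{l=0}^k γ_l² / (2 μ_m ∑_{l=0}^k γ_l). (Theorem 1 of the paper: convergence of Fisher-SGD when the latent variables are simulated from the posterior distribution.) -/
/-!
Along the step `θₖ₊₁ = θₖ - γₖ Pₖ Hₖ` the descent lemma for the `L`-smooth `F` gives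
`F θₖ₊₁ ≤ F θₖ - γₖ ⟪Pₖ ∇F θₖ, Hₖ⟫ + (L/2) γₖ² ‖Pₖ Hₖ‖²`. Conditional Jensen bounds
`‖∇F θₖ‖² = ‖𝔼[Hₖ | 𝔉ₖ]‖²` by `C`, so `Pₖ ∇F θₖ` is a bounded `𝔉ₖ`-measurable vector and can be
pulled out of the conditional expectation: the cross term has expectation
`𝔼 ⟪Pₖ ∇F θₖ, ∇F θₖ⟫ ≥ μm 𝔼 ‖∇F θₖ‖²`. Since `‖Pₖ‖ ≤ μM`, the quadratic term has expectation at
most `(L/2) γₖ² μM² C`. Telescoping these one-step bounds and `F ≥ F*` give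
`μm ∑ γₗ 𝔼 ‖∇F θₗ‖² ≤ F θ₀ - F* + (L/2) μM² C ∑ γₗ²`, and the expected minimum is at most the
`γ`-weighted average of the `𝔼 ‖∇F θₗ‖²`.
-/

open MeasureTheory Finset
open scoped RealInnerProductSpace

section Descent

variable {E : Type*} [NormedAddCommGroup E] [InnerProductSpace ℝ E] [CompleteSpace E]

theorem Differentiable.apply_add_le_of_lipschitz_gradient {F : E → ℝ}
    (hF : Differentiable ℝ F) {L : ℝ}
    (hLip : ∀ x y, ‖gradient F x - gradient F y‖ ≤ L * ‖x - y‖) (x v : E) :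
    F (x + v) ≤ F x + ⟪gradient F x, v⟫ + L / 2 * ‖v‖ ^ 2 := by
  set φ : ℝ → ℝ := fun t => F (x + t • v) - t * ⟪gradient F x, v⟫ - L / 2 * t ^ 2 * ‖v‖ ^ 2
  have hφ' : ∀ t,
      HasDerivAt φ (⟪gradient F (x + t • v) - gradient F x, v⟫ - L * t * ‖v‖ ^ 2) t := by
    intro t
    have hline : HasDerivAt (fun s : ℝ => x + s • v) v t := by
      simpa using ((hasDerivAt_id t).smul_const v).const_add x
    have hFline := (hF (x + t • v)).hasFDerivAt.comp_hasDerivAt t hline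
    rw [← inner_gradient_left] at hFline
    refine ((hFline.sub ((hasDerivAt_id t).mul_const ⟪gradient F x, v⟫)).sub
      (((hasDerivAt_pow 2 t).const_mul (L / 2)).mul_const (‖v‖ ^ 2))).congr_deriv ?_
    simp only [inner_sub_left, Nat.cast_ofNat]
    ring
  have hφ'_nonpos : ∀ t ∈ interior (Set.Ici (0 : ℝ)),
      ⟪gradient F (x + t • v) - gradient F x, v⟫ - L * t * ‖v‖ ^ 2 ≤ 0 := by
    intro t ht
    rw [interior_Ici, Set.mem_Ioi] at ht
    have hgrad := hLip (x + t • v) x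
    rw [add_sub_cancel_left, norm_smul, Real.norm_of_nonneg ht.le] at hgrad
    rw [sub_nonpos]
    calc ⟪gradient F (x + t • v) - gradient F x, v⟫
        ≤ ‖gradient F (x + t • v) - gradient F x‖ * ‖v‖ := real_inner_le_norm _ _
      _ ≤ L * (t * ‖v‖) * ‖v‖ := by gcongr
      _ = L * t * ‖v‖ ^ 2 := by ring
  have h10 : φ 1 ≤ φ 0 := antitoneOn_of_hasDerivWithinAt_nonpos (convex_Ici 0)
    (fun t _ => (hφ' t).continuousAt.continuousWithinAt)
    (fun t _ => (hφ' t).hasDerivWithinAt) hφ'_nonpos Set.self_mem_Ici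
    (Set.mem_Ici.2 zero_le_one) zero_le_one
  simp only [φ, one_smul, zero_smul, add_zero] at h10
  linarith

end Descent

namespace ContinuousLinearMap

variable {E : Type*} [NormedAddCommGroup E] [InnerProductSpace ℝ E]

theorem norm_le_of_inner_self_le {T : E →L[ℝ] E} (hT : (T : E →ₗ[ℝ] E).IsSymmetric) {c : ℝ}
    (hc : 0 ≤ c) (hT₀ : ∀ x, 0 ≤ ⟪x, T x⟫) (hTc : ∀ x, ⟪x, T x⟫ ≤ c * ‖x‖ ^ 2) : ‖T‖ ≤ c := by
  rw [T.norm_eq_iSup_rayleighQuotient hT]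
  refine ciSup_le fun x => ?_
  rcases eq_or_ne x 0 with rfl | hx
  · simpa using hc
  rw [rayleighQuotient, reApplyInnerSelf_apply, RCLike.re_to_real, real_inner_comm,
    abs_div, abs_of_nonneg (hT₀ x), abs_sq, div_le_iff₀ (by positivity)]
  exact hTc x

theorem sq_norm_apply_le_of_opNorm_le {A : E →L[ℝ] E} {c : ℝ} (hA : ‖A‖ ≤ c) (v : E) :
    ‖A v‖ ^ 2 ≤ c ^ 2 * ‖v‖ ^ 2 := by
  rw [← mul_pow]
  gcongr
  exact A.le_of_opNorm_le hA v

end ContinuousLinearMap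

section ConditionalJensen

variable {Ω E : Type*} {m m0 : MeasurableSpace Ω} {μ : Measure Ω}
  [NormedAddCommGroup E] [NormedSpace ℝ E] [CompleteSpace E]

theorem sq_norm_condExp_le {f : Ω → E} (hf : Integrable (fun ω => ‖f ω‖ ^ 2) μ) :
    (fun ω => ‖μ[f|m] ω‖ ^ 2) ≤ᵐ[μ] μ[fun ω => ‖f ω‖ ^ 2|m] := by
  simpa only [Real.rpow_two] using Integrable.norm_condExp_rpow_le (m := m) (p := 2)
    (by norm_num) (by simpa only [Real.rpow_two] using hf)

theorem ae_sq_norm_le_of_condExp_eq {f g : Ω → E} (hf : Integrable (fun ω => ‖f ω‖ ^ 2) μ)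
    (hfg : μ[f|m] =ᵐ[μ] g) {C : ℝ} (hC : ∀ᵐ ω ∂μ, μ[fun ω => ‖f ω‖ ^ 2|m] ω ≤ C) :
    ∀ᵐ ω ∂μ, ‖g ω‖ ^ 2 ≤ C := by
  filter_upwards [sq_norm_condExp_le hf, hfg, hC] with ω hJensen hω hCω
  rw [← hω]
  exact hJensen.trans hCω

theorem integrable_sq_norm_of_condExp_eq [IsFiniteMeasure μ] (hm : m ≤ m0) {f g : Ω → E}
    (hf : Integrable (fun ω => ‖f ω‖ ^ 2) μ) (hfg : μ[f|m] =ᵐ[μ] g) {C : ℝ}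
    (hC : ∀ᵐ ω ∂μ, μ[fun ω => ‖f ω‖ ^ 2|m] ω ≤ C) :
    Integrable (fun ω => ‖g ω‖ ^ 2) μ := by
  have hg : AEStronglyMeasurable g μ :=
    (stronglyMeasurable_condExp.aestronglyMeasurable.congr hfg).mono hm
  refine .of_bound (hg.norm.pow 2) C ?_
  filter_upwards [ae_sq_norm_le_of_condExp_eq hf hfg hC] with ω hω
  rwa [Real.norm_of_nonneg (by positivity)]

end ConditionalJensen

section ConditionalExpectation

variable {Ω : Type*} {m m0 : MeasurableSpace Ω} {μ : Measure Ω}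

theorem integral_le_of_condExp_le [IsProbabilityMeasure μ] (hm : m ≤ m0) {f : Ω → ℝ} {C : ℝ}
    (hC : ∀ᵐ ω ∂μ, μ[f|m] ω ≤ C) : ∫ ω, f ω ∂μ ≤ C := by
  rw [← integral_condExp hm]
  simpa using integral_mono_ae integrable_condExp (integrable_const C) hC

theorem integral_inner_condExp_right {E : Type*} [NormedAddCommGroup E] [InnerProductSpace ℝ E]
    [CompleteSpace E] [IsFiniteMeasure μ] (hm : m ≤ m0) {f g : Ω → E}
    (hg : AEStronglyMeasurable[m] g μ) {c : ℝ} (hgc : ∀ᵐ ω ∂μ, ‖g ω‖ ≤ c)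
    (hf : Integrable f μ) :
    ∫ ω, ⟪g ω, f ω⟫ ∂μ = ∫ ω, ⟪g ω, μ[f|m] ω⟫ ∂μ := by
  rw [← integral_condExp hm]
  exact integral_congr_ae (condExp_aestronglyMeasurable_bilin_of_bound (innerSL ℝ) hm hg hf c hgc)

end ConditionalExpectation

section PreconditionedStep

variable {Ω E : Type*} {m m0 : MeasurableSpace Ω} {μ : Measure Ω}
  [NormedAddCommGroup E] [InnerProductSpace ℝ E] [FiniteDimensional ℝ E]
  {P : Ω → E →L[ℝ] E} {g h : Ω → E} {μm μM C : ℝ}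

theorem ae_norm_apply_le_of_condExp_eq (hPnorm : ∀ ω, ‖P ω‖ ≤ μM)
    (hh2 : Integrable (fun ω => ‖h ω‖ ^ 2) μ) (hhg : μ[h|m] =ᵐ[μ] g)
    (hC : ∀ᵐ ω ∂μ, μ[fun ω => ‖h ω‖ ^ 2|m] ω ≤ C) :
    ∀ᵐ ω ∂μ, ‖P ω (g ω)‖ ≤ μM * √C := by
  filter_upwards [ae_sq_norm_le_of_condExp_eq hh2 hhg hC] with ω hω
  calc ‖P ω (g ω)‖ ≤ ‖P ω‖ * ‖g ω‖ := (P ω).le_opNorm _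
    _ ≤ μM * √C := by
      gcongr
      · exact (norm_nonneg _).trans (hPnorm ω)
      · exact hPnorm ω
      · simpa using Real.abs_le_sqrt hω

theorem aestronglyMeasurable_apply_of_condExp_eq (hP : Measurable[m] P)
    (hhg : μ[h|m] =ᵐ[μ] g) : AEStronglyMeasurable[m] (fun ω => P ω (g ω)) μ :=
  isBoundedBilinearMap_apply.continuous.comp_aestronglyMeasurable
    (hP.stronglyMeasurable.aestronglyMeasurable.prodMk
      (stronglyMeasurable_condExp.aestronglyMeasurable.congr hhg))

theorem integral_inner_apply_eq_of_condExp_eq [IsFiniteMeasure μ] (hm : m ≤ m0)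
    (hP : Measurable[m] P) (hPnorm : ∀ ω, ‖P ω‖ ≤ μM) (hh : Integrable h μ)
    (hh2 : Integrable (fun ω => ‖h ω‖ ^ 2) μ) (hhg : μ[h|m] =ᵐ[μ] g)
    (hC : ∀ᵐ ω ∂μ, μ[fun ω => ‖h ω‖ ^ 2|m] ω ≤ C) :
    ∫ ω, ⟪P ω (g ω), h ω⟫ ∂μ = ∫ ω, ⟪P ω (g ω), g ω⟫ ∂μ := by
  rw [integral_inner_condExp_right hm (aestronglyMeasurable_apply_of_condExp_eq hP hhg)
    (ae_norm_apply_le_of_condExp_eq hPnorm hh2 hhg hC) hh]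
  refine integral_congr_ae ?_
  filter_upwards [hhg] with ω hω
  rw [hω]

theorem mul_integral_sq_norm_le_integral_inner_apply [IsFiniteMeasure μ] (hm : m ≤ m0)
    (hP : Measurable[m] P) (hPlb : ∀ ω v, μm * ‖v‖ ^ 2 ≤ ⟪v, P ω v⟫)
    (hPnorm : ∀ ω, ‖P ω‖ ≤ μM) (hh : Integrable h μ)
    (hh2 : Integrable (fun ω => ‖h ω‖ ^ 2) μ) (hhg : μ[h|m] =ᵐ[μ] g)
    (hC : ∀ᵐ ω ∂μ, μ[fun ω => ‖h ω‖ ^ 2|m] ω ≤ C) :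
    μm * ∫ ω, ‖g ω‖ ^ 2 ∂μ ≤ ∫ ω, ⟪P ω (g ω), h ω⟫ ∂μ := by
  have hPg_int : Integrable (fun ω => ⟪P ω (g ω), g ω⟫) μ :=
    (innerSL ℝ).integrable_of_bilin_of_bdd_left (μM * √C)
      ((aestronglyMeasurable_apply_of_condExp_eq hP hhg).mono hm)
      (ae_norm_apply_le_of_condExp_eq hPnorm hh2 hhg hC) (integrable_condExp.congr hhg)
  rw [integral_inner_apply_eq_of_condExp_eq hm hP hPnorm hh hh2 hhg hC,
    ← integral_const_mul]
  refine integral_mono ((integrable_sq_norm_of_condExp_eq hm hh2 hhg hC).const_mul μm)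
    hPg_int fun ω => ?_
  rw [real_inner_comm]
  exact hPlb ω (g ω)

theorem integrable_sq_norm_apply (hP : Measurable P) (hPnorm : ∀ ω, ‖P ω‖ ≤ μM)
    (hh2 : Integrable (fun ω => ‖h ω‖ ^ 2) μ) (hh : AEStronglyMeasurable h μ) :
    Integrable (fun ω => ‖P ω (h ω)‖ ^ 2) μ := by
  refine (hh2.const_mul (μM ^ 2)).mono'
    ((isBoundedBilinearMap_apply.continuous.comp_aestronglyMeasurable
      (hP.aestronglyMeasurable.prodMk hh)).norm.pow 2) (ae_of_all _ fun ω => ?_)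
  rw [Real.norm_of_nonneg (by positivity)]
  exact (P ω).sq_norm_apply_le_of_opNorm_le (hPnorm ω) (h ω)

theorem integral_sq_norm_apply_le [IsProbabilityMeasure μ] (hm : m ≤ m0) (hP : Measurable P)
    (hPnorm : ∀ ω, ‖P ω‖ ≤ μM) (hh2 : Integrable (fun ω => ‖h ω‖ ^ 2) μ)
    (hh : AEStronglyMeasurable h μ) (hC : ∀ᵐ ω ∂μ, μ[fun ω => ‖h ω‖ ^ 2|m] ω ≤ C) :
    ∫ ω, ‖P ω (h ω)‖ ^ 2 ∂μ ≤ μM ^ 2 * C :=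
  calc ∫ ω, ‖P ω (h ω)‖ ^ 2 ∂μ ≤ ∫ ω, μM ^ 2 * ‖h ω‖ ^ 2 ∂μ :=
        integral_mono (integrable_sq_norm_apply hP hPnorm hh2 hh) (hh2.const_mul _)
          fun ω => (P ω).sq_norm_apply_le_of_opNorm_le (hPnorm ω) (h ω)
    _ = μM ^ 2 * ∫ ω, ‖h ω‖ ^ 2 ∂μ := integral_const_mul _ _
    _ ≤ μM ^ 2 * C := by gcongr; exact integral_le_of_condExp_le hm hC

theorem integral_preconditioned_step_le [IsProbabilityMeasure μ] {F : E → ℝ}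
    (hF : Differentiable ℝ F) {L : ℝ} (hL : 0 ≤ L)
    (hLip : ∀ x y, ‖gradient F x - gradient F y‖ ≤ L * ‖x - y‖) (hm : m ≤ m0)
    (hP : Measurable[m] P) (hPsa : ∀ ω, IsSelfAdjoint (P ω))
    (hPlb : ∀ ω v, μm * ‖v‖ ^ 2 ≤ ⟪v, P ω v⟫) (hPnorm : ∀ ω, ‖P ω‖ ≤ μM) {x : Ω → E}
    (hh : Integrable h μ) (hh2 : Integrable (fun ω => ‖h ω‖ ^ 2) μ)
    (hhg : μ[h|m] =ᵐ[μ] fun ω => gradient F (x ω))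
    (hC : ∀ᵐ ω ∂μ, μ[fun ω => ‖h ω‖ ^ 2|m] ω ≤ C) {t : ℝ} (ht : 0 ≤ t)
    (hFx : Integrable (fun ω => F (x ω)) μ)
    (hFx' : Integrable (fun ω => F (x ω - t • P ω (h ω))) μ) :
    ∫ ω, F (x ω - t • P ω (h ω)) ∂μ ≤ ∫ ω, F (x ω) ∂μ
      - t * (μm * ∫ ω, ‖gradient F (x ω)‖ ^ 2 ∂μ) + t ^ 2 * (L / 2 * (μM ^ 2 * C)) := by
  have hpointwise : ∀ ω, F (x ω - t • P ω (h ω)) ≤ F (x ω)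
      - t * ⟪P ω (gradient F (x ω)), h ω⟫ + t ^ 2 * (L / 2 * ‖P ω (h ω)‖ ^ 2) := by
    intro ω
    have := hF.apply_add_le_of_lipschitz_gradient hLip (x ω) (-(t • P ω (h ω)))
    have hsym : ⟪gradient F (x ω), P ω (h ω)⟫ = ⟪P ω (gradient F (x ω)), h ω⟫ :=
      ((hPsa ω).isSymmetric _ _).symm
    rw [← sub_eq_add_neg, inner_neg_right, real_inner_smul_right, hsym, norm_neg, norm_smul,
      Real.norm_of_nonneg ht] at this
    linarith
  have hcross_int : Integrable (fun ω => ⟪P ω (gradient F (x ω)), h ω⟫) μ :=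
    (innerSL ℝ).integrable_of_bilin_of_bdd_left (μM * √C)
      ((aestronglyMeasurable_apply_of_condExp_eq hP hhg).mono hm)
      (ae_norm_apply_le_of_condExp_eq hPnorm hh2 hhg hC) hh
  have hnoise_int :=
    integrable_sq_norm_apply (hP.mono hm le_rfl) hPnorm hh2 hh.aestronglyMeasurable
  have hdescent_int : Integrable (fun ω => F (x ω) - t * ⟪P ω (gradient F (x ω)), h ω⟫) μ :=
    hFx.sub (hcross_int.const_mul t)
  calc ∫ ω, F (x ω - t • P ω (h ω)) ∂μ
      ≤ ∫ ω, (F (x ω) - t * ⟪P ω (gradient F (x ω)), h ω⟫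
          + t ^ 2 * (L / 2 * ‖P ω (h ω)‖ ^ 2)) ∂μ :=
        integral_mono hFx' (hdescent_int.add ((hnoise_int.const_mul _).const_mul _)) hpointwise
    _ = ∫ ω, F (x ω) ∂μ - t * ∫ ω, ⟪P ω (gradient F (x ω)), h ω⟫ ∂μ
          + t ^ 2 * (L / 2 * ∫ ω, ‖P ω (h ω)‖ ^ 2 ∂μ) := by
        rw [integral_add hdescent_int ((hnoise_int.const_mul _).const_mul _),
          integral_sub hFx (hcross_int.const_mul t), integral_const_mul, integral_const_mul,
          integral_const_mul]
    _ ≤ _ := by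
        gcongr
        · exact mul_integral_sq_norm_le_integral_inner_apply hm hP hPlb hPnorm hh hh2 hhg hC
        · exact integral_sq_norm_apply_le hm (hP.mono hm le_rfl) hPnorm hh2
            hh.aestronglyMeasurable hC

end PreconditionedStep

theorem Finset.sum_range_le_sub_add_of_le_sub_add {α : Type*} [AddCommGroup α] [PartialOrder α]
    [IsOrderedAddMonoid α] {a b c : ℕ → α} (h : ∀ l, a (l + 1) ≤ a l - b l + c l) (n : ℕ) :
    ∑ l ∈ range n, b l ≤ a 0 - a n + ∑ l ∈ range n, c l := by
  rw [← sum_range_sub', ← sum_add_distrib]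
  refine sum_le_sum fun l _ => ?_
  have := h l
  rw [sub_add_eq_add_sub, le_sub_iff_add_le, add_comm, ← le_sub_iff_add_le] at this
  rwa [sub_add_eq_add_sub]

theorem le_div_of_descent {a G γ : ℕ → ℝ} {μm c M b : ℝ} {n : ℕ} (hμm : 0 < μm)
    (hγ : ∀ l, 0 ≤ γ l) (hsum : 0 < ∑ l ∈ range n, γ l)
    (hdesc : ∀ l, a (l + 1) ≤ a l - γ l * (μm * G l) + γ l ^ 2 * c)
    (hlow : b ≤ a n) (hM : ∀ l ∈ range n, M ≤ G l) :
    M ≤ (a 0 - b + c * ∑ l ∈ range n, γ l ^ 2) / (μm * ∑ l ∈ range n, γ l) := by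
  have htelescope := sum_range_le_sub_add_of_le_sub_add hdesc n
  have hweighted : μm * (∑ l ∈ range n, γ l) * M ≤ ∑ l ∈ range n, γ l * (μm * G l) := by
    rw [mul_sum, sum_mul]
    refine sum_le_sum fun l hl => ?_
    calc μm * γ l * M = γ l * (μm * M) := by ring
      _ ≤ γ l * (μm * G l) := by gcongr; exacts [hγ l, hM l hl]
  rw [← sum_mul] at htelescope
  rw [le_div_iff₀ (by positivity)]
  linarith

theorem fisher_sgd_posterior_convergence_general
    {d : ℕ}
    {Ω : Type*} {m0 : MeasurableSpace Ω} {μ : Measure Ω} [IsProbabilityMeasure μ]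
    (𝔉 : Filtration ℕ m0)
    (F : EuclideanSpace ℝ (Fin d) → ℝ) (Fstar : ℝ)
    (hFdiff : Differentiable ℝ F)
    (hFstar : IsGLB (Set.range F) Fstar)
    (L : ℝ) (hL : 0 < L)
    (hLip : ∀ x y : EuclideanSpace ℝ (Fin d),
      ‖gradient F x - gradient F y‖ ≤ L * ‖x - y‖)
    (γ : ℕ → ℝ) (hγ0 : ∀ k, 0 ≤ γ k)
    (μm μM C : ℝ) (hμm : 0 < μm) (hμmM : μm ≤ μM)
    (θ : ℕ → Ω → EuclideanSpace ℝ (Fin d))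
    (θ₀ : EuclideanSpace ℝ (Fin d)) (hθ0 : ∀ ω, θ 0 ω = θ₀)
    (P : ℕ → Ω → (EuclideanSpace ℝ (Fin d) →L[ℝ] EuclideanSpace ℝ (Fin d)))
    (H : ℕ → Ω → EuclideanSpace ℝ (Fin d))
    (hPmeas : ∀ k, Measurable[𝔉 k] (P k))
    -- `P k ω` is symmetric positive definite with all eigenvalues in `[μm, μM]`
    (hPsa : ∀ k ω, IsSelfAdjoint (P k ω))
    (hPlb : ∀ k ω (v : EuclideanSpace ℝ (Fin d)), μm * ‖v‖ ^ 2 ≤ ⟪v, P k ω v⟫)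
    (hPub : ∀ k ω (v : EuclideanSpace ℝ (Fin d)), ⟪v, P k ω v⟫ ≤ μM * ‖v‖ ^ 2)
    (hHint : ∀ k, Integrable (H k) μ)
    (hHcond : ∀ k, μ[H k | 𝔉 k] =ᵐ[μ] fun ω => gradient F (θ k ω))
    (hHsqint : ∀ k, Integrable (fun ω => ‖H k ω‖ ^ 2) μ)
    (hHsq : ∀ k, ∀ᵐ ω ∂μ, (μ[fun ω' => ‖H k ω'‖ ^ 2 | 𝔉 k]) ω ≤ C)
    (hrec : ∀ k ω, θ (k + 1) ω = θ k ω - γ k • P k ω (H k ω))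
    (hFint : ∀ k, Integrable (fun ω => F (θ k ω)) μ)
    (k : ℕ) (hsum : 0 < ∑ l ∈ range (k + 1), γ l) :
    ∫ ω, ((range (k + 1)).inf' nonempty_range_add_one
        fun l => ‖gradient F (θ l ω)‖ ^ 2) ∂μ
      ≤ 2 * (F θ₀ - Fstar) / (2 * μm * ∑ l ∈ range (k + 1), γ l)
        + μM ^ 2 * C * L * (∑ l ∈ range (k + 1), γ l ^ 2)
          / (2 * μm * ∑ l ∈ range (k + 1), γ l) := by
  have hPnorm : ∀ l ω, ‖P l ω‖ ≤ μM := fun l ω =>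
    (P l ω).norm_le_of_inner_self_le (hPsa l ω).isSymmetric (hμm.le.trans hμmM)
      (fun v => (by positivity : 0 ≤ μm * ‖v‖ ^ 2).trans (hPlb l ω v)) (hPub l ω)
  have hdescent : ∀ l, ∫ ω, F (θ (l + 1) ω) ∂μ ≤ ∫ ω, F (θ l ω) ∂μ
      - γ l * (μm * ∫ ω, ‖gradient F (θ l ω)‖ ^ 2 ∂μ) + γ l ^ 2 * (L / 2 * (μM ^ 2 * C)) := by
    intro l
    have hnext := hFint (l + 1)
    simp only [hrec] at hnext ⊢
    exact integral_preconditioned_step_le hFdiff hL.le hLip (𝔉.le l) (hPmeas l) (hPsa l)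
      (hPlb l) (hPnorm l) (hHint l) (hHsqint l) (hHcond l) (hHsq l) (hγ0 l) (hFint l) hnext
  have hlow : Fstar ≤ ∫ ω, F (θ (k + 1) ω) ∂μ := by
    simpa using integral_mono (integrable_const Fstar) (hFint (k + 1))
      fun ω => hFstar.1 ⟨θ (k + 1) ω, rfl⟩
  have hmin : ∀ l ∈ range (k + 1), ∫ ω, ((range (k + 1)).inf' nonempty_range_add_one
      fun l => ‖gradient F (θ l ω)‖ ^ 2) ∂μ ≤ ∫ ω, ‖gradient F (θ l ω)‖ ^ 2 ∂μ := fun l hl =>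
    integral_mono_of_nonneg (ae_of_all _ fun ω => le_inf' _ _ fun _ _ => by positivity)
      (integrable_sq_norm_of_condExp_eq (𝔉.le l) (hHsqint l) (hHcond l) (hHsq l))
      (ae_of_all _ fun ω => inf'_le _ hl)
  have hrate :=
    le_div_of_descent (a := fun l => ∫ ω, F (θ l ω) ∂μ) hμm hγ0 hsum hdescent hlow hmin
  simp only [hθ0, integral_const, probReal_univ, one_smul] at hrate
  convert hrate using 1
  field_simp

/-- **Theorem 1** (Fisher-SGD, posterior sampling case): under regularity assumptions on the
objective `F`, eigenvalue bounds on the preconditioners and a conditional second-moment bound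
on the stochastic gradients, the iterates satisfy the stated convergence guarantee. -/
theorem fisher_sgd_posterior_convergence
    {d : ℕ} (hd : 1 ≤ d)
    {Ω : Type*} {m0 : MeasurableSpace Ω} {μ : Measure Ω} [IsProbabilityMeasure μ]
    (𝔉 : Filtration ℕ m0)
    (F : EuclideanSpace ℝ (Fin d) → ℝ) (Fstar : ℝ)
    (hFdiff : Differentiable ℝ F)
    (hFstar : IsGLB (Set.range F) Fstar)
    (L : ℝ) (hL : 0 < L)
    (hLip : ∀ x y : EuclideanSpace ℝ (Fin d),
      ‖gradient F x - gradient F y‖ ≤ L * ‖x - y‖)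
    (γ : ℕ → ℝ) (hγ0 : ∀ k, 0 ≤ γ k) (hγ1 : ∀ k, γ k ≤ 1)
    (μm μM C : ℝ) (hμm : 0 < μm) (hμmM : μm ≤ μM) (hC : 0 < C)
    (θ : ℕ → Ω → EuclideanSpace ℝ (Fin d))
    (θ₀ : EuclideanSpace ℝ (Fin d)) (hθ0 : ∀ ω, θ 0 ω = θ₀)
    (P : ℕ → Ω → (EuclideanSpace ℝ (Fin d) →L[ℝ] EuclideanSpace ℝ (Fin d)))
    (H : ℕ → Ω → EuclideanSpace ℝ (Fin d))
    (hθmeas : ∀ k, Measurable[𝔉 k] (θ k))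
    (hPmeas : ∀ k, Measurable[𝔉 k] (P k))
    -- `P k ω` is symmetric positive definite with all eigenvalues in `[μm, μM]`
    (hPsa : ∀ k ω, IsSelfAdjoint (P k ω))
    (hPlb : ∀ k ω (v : EuclideanSpace ℝ (Fin d)), μm * ‖v‖ ^ 2 ≤ ⟪v, P k ω v⟫)
    (hPub : ∀ k ω (v : EuclideanSpace ℝ (Fin d)), ⟪v, P k ω v⟫ ≤ μM * ‖v‖ ^ 2)
    (hHmeas : ∀ k, Measurable[𝔉 (k + 1)] (H k))
    (hHint : ∀ k, Integrable (H k) μ)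
    (hHcond : ∀ k, μ[H k | 𝔉 k] =ᵐ[μ] fun ω => gradient F (θ k ω))
    (hHsqint : ∀ k, Integrable (fun ω => ‖H k ω‖ ^ 2) μ)
    (hHsq : ∀ k, ∀ᵐ ω ∂μ, (μ[fun ω' => ‖H k ω'‖ ^ 2 | 𝔉 k]) ω ≤ C)
    (hrec : ∀ k ω, θ (k + 1) ω = θ k ω - γ k • P k ω (H k ω))
    (hFint : ∀ k, Integrable (fun ω => F (θ k ω)) μ)
    (k : ℕ) (hsum : 0 < ∑ l ∈ range (k + 1), γ l) :
    ∫ ω, ((range (k + 1)).inf' nonempty_range_add_one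
        fun l => ‖gradient F (θ l ω)‖ ^ 2) ∂μ
      ≤ 2 * (F θ₀ - Fstar) / (2 * μm * ∑ l ∈ range (k + 1), γ l)
        + μM ^ 2 * C * L * (∑ l ∈ range (k + 1), γ l ^ 2)
          / (2 * μm * ∑ l ∈ range (k + 1), γ l) :=
  fisher_sgd_posterior_convergence_general 𝔉 F Fstar hFdiff hFstar L hL hLip γ hγ0 μm μM C hμm hμmM
    θ θ₀ hθ0 P H hPmeas hPsa hPlb hPub hHint hHcond hHsqint hHsq hrec hFint k hsum
end

section
/- Suppose in addition that Ĥ : Θ × 𝒵 → ℝ^d is measurable with sup_{θ∈Θ} |Ĥ_θ|_W < ∞, satisfies the Poisson equation Ĥ_θ(z) − (Π_θ Ĥ_θ)(z) = H_θ(z) − h̄(θ) for all (θ, z), and satisfies the Lipschitz bound sup_z ‖(Π_θ Ĥ_θ)(z) − (Π_{θ'} Ĥ_{θ'})(z)‖ / W(z) ≤ C_P ‖θ − θ'‖ for all θ, θ' ∈ Θ; suppose also ‖h̄(θ)‖ ≤ C₀ for all θ ∈ Θ and h̄ is L-Lipschitz on Θ. Define R_k = (Π_{θ_k} Ĥ_{θ_k})(Z^k)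 − (Π_{θ_{k+1}} Ĥ_{θ_{k+1}})(Z^{k+1}). Then the series ∑_{k≥0} γ_k ⟨h̄(θ_k), P(θ_k) R_k⟩ converges almost surely. (Control of the R_k part, via Abel transformation, in the proof of Lemma 3.) -/
/-!
Abel summation. With `c_k = γ_k P(θ_k) h̄(θ_k)` and `X_k = (Π_{θ_k} Ĥ_{θ_k})(Z^k)`, self-adjointness
of `P` turns the partial sums into
`∑_{k<n} ⟪c_k, X_k - X_{k+1}⟫ = ⟪c_0, X_0⟫ - ⟪c_n, X_n⟫ + ∑_{k<n} ⟪c_{k+1} - c_k, X_{k+1}⟫`.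
The Poisson equation gives `‖X_k‖ ≲ W(Z^k)`, and the Lipschitz bounds on `P` and `h̄` together with
`‖θ_{k+1} - θ_k‖ ≲ γ_k W(Z^{k+1})` give `‖c_{k+1} - c_k‖ ≲ |γ_{k+1} - γ_k| + γ_k² W(Z^{k+1})`.
So everything is controlled by `∑ (γ_k² + |γ_{k+1} - γ_k|) W²(Z^{k+1})` and `∑ γ_k² W²(Z^k)`,
which converge almost surely because the drift condition, transported along the conditional laws
of the chain, bounds `𝔼 W^p(Z^k)` uniformly in `k`.
-/

open MeasureTheory ProbabilityTheory Filter Finset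
open scoped RealInnerProductSpace ENNReal Topology

namespace ContinuousLinearMap

theorem opNorm_le_of_inner_map_self_le {E : Type*} [NormedAddCommGroup E] [InnerProductSpace ℝ E]
    (T : E →L[ℝ] E) (hT : (T : E →ₗ[ℝ] E).IsSymmetric)
    {c : ℝ} (hc : 0 ≤ c) (h0 : ∀ x, 0 ≤ ⟪x, T x⟫) (h : ∀ x, ⟪x, T x⟫ ≤ c * ‖x‖ ^ 2) :
    ‖T‖ ≤ c := by
  rw [T.norm_eq_iSup_rayleighQuotient hT]
  refine ciSup_le fun x => ?_
  rw [rayleighQuotient, reApplyInnerSelf_apply, RCLike.re_to_real, real_inner_comm,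
    abs_of_nonneg (div_nonneg (h0 x) (sq_nonneg _))]
  rcases eq_or_ne x 0 with rfl | hx
  · simpa using hc
  · exact div_le_of_le_mul₀ (sq_nonneg _) hc (h x)

theorem norm_apply_sub_apply_le {𝕜 E F : Type*} [NontriviallyNormedField 𝕜]
    [SeminormedAddCommGroup E] [SeminormedAddCommGroup F] [NormedSpace 𝕜 E] [NormedSpace 𝕜 F]
    (A A' : E →L[𝕜] F) (x x' : E) : ‖A' x' - A x‖ ≤ ‖A' - A‖ * ‖x'‖ + ‖A‖ * ‖x' - x‖ := by
  have : A' x' - A x = (A' - A) x' + A (x' - x) := by simp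
  rw [this]
  exact (norm_add_le _ _).trans (add_le_add ((A' - A).le_opNorm x') (A.le_opNorm _))

end ContinuousLinearMap

theorem norm_smul_sub_smul_le {E : Type*} [SeminormedAddCommGroup E] [NormedSpace ℝ E]
    (a a' : ℝ) (v v' : E) : ‖a' • v' - a • v‖ ≤ |a' - a| * ‖v'‖ + |a| * ‖v' - v‖ := by
  have : a' • v' - a • v = (a' - a) • v' + a • (v' - v) := by
    simp only [sub_smul, smul_sub]; abel
  rw [this]
  refine (norm_add_le _ _).trans ?_
  rw [norm_smul, norm_smul, Real.norm_eq_abs, Real.norm_eq_abs]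

section Abel

variable {E : Type*} [NormedAddCommGroup E] [InnerProductSpace ℝ E]

theorem sum_range_inner_sub_eq (c X : ℕ → E) (n : ℕ) :
    ∑ k ∈ range n, ⟪c k, X k - X (k + 1)⟫
      = ⟪c 0, X 0⟫ - ⟪c n, X n⟫ + ∑ k ∈ range n, ⟪c (k + 1) - c k, X (k + 1)⟫ := by
  induction n with
  | zero => simp
  | succ n ih =>
    rw [sum_range_succ, sum_range_succ, ih]
    simp only [inner_sub_left, inner_sub_right]
    ring

theorem exists_tendsto_sum_inner_sub (c X : ℕ → E)
    (hsum : Summable fun k => ‖c (k + 1) - c k‖ * ‖X (k + 1)‖)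
    (hlim : Tendsto (fun n => ⟪c n, X n⟫) atTop (𝓝 0)) :
    ∃ s, Tendsto (fun n => ∑ k ∈ range n, ⟪c k, X k - X (k + 1)⟫) atTop (𝓝 s) := by
  have hδ : Summable fun k => ⟪c (k + 1) - c k, X (k + 1)⟫ :=
    hsum.of_norm_bounded fun k => abs_real_inner_le_norm _ _
  simp only [sum_range_inner_sub_eq]
  exact ⟨_, ((tendsto_const_nhds.sub hlim).add hδ.hasSum.tendsto_sum_nat)⟩

theorem exists_tendsto_sum_smul_inner_sub (γ : ℕ → ℝ) (hγ : ∀ k, 0 ≤ γ k) (v X : ℕ → E)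
    (w : ℕ → ℝ) (hw : ∀ k, 1 ≤ w k) {A B C : ℝ} (hv : ∀ k, ‖v k‖ ≤ A)
    (hdv : ∀ k, ‖v (k + 1) - v k‖ ≤ B * (γ k * w (k + 1))) (hX : ∀ k, ‖X k‖ ≤ C * w k)
    (hsq : Summable fun k => γ k ^ 2 * w k ^ 2)
    (hsq' : Summable fun k => γ k ^ 2 * w (k + 1) ^ 2)
    (hvar : Summable fun k => |γ (k + 1) - γ k| * w (k + 1) ^ 2) :
    ∃ s, Tendsto (fun n => ∑ k ∈ range n, γ k * ⟪v k, X k - X (k + 1)⟫) atTop (𝓝 s) := by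
  have hA : 0 ≤ A := (norm_nonneg _).trans (hv 0)
  have hC : 0 ≤ C := nonneg_of_mul_nonneg_left ((norm_nonneg _).trans (hX 0)) (by linarith [hw 0])
  have hw0 k : 0 ≤ w k := zero_le_one.trans (hw k)
  have hww k : w k ≤ w k ^ 2 := by nlinarith [hw k]
  set c := fun k => γ k • v k
  have hdc k : ‖c (k + 1) - c k‖ * ‖X (k + 1)‖
      ≤ A * C * (|γ (k + 1) - γ k| * w (k + 1) ^ 2) + B * C * (γ k ^ 2 * w (k + 1) ^ 2) := by
    have hc := (norm_smul_sub_smul_le (γ k) (γ (k + 1)) (v k) (v (k + 1))).trans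
      (add_le_add (mul_le_mul_of_nonneg_left (hv (k + 1)) (abs_nonneg _))
        (mul_le_mul_of_nonneg_left (hdv k) (abs_nonneg _)))
    rw [abs_of_nonneg (hγ k)] at hc
    calc ‖c (k + 1) - c k‖ * ‖X (k + 1)‖
        ≤ (|γ (k + 1) - γ k| * A + γ k * (B * (γ k * w (k + 1)))) * (C * w (k + 1)) :=
          mul_le_mul hc (hX _) (norm_nonneg _) ((norm_nonneg _).trans hc)
      _ = A * C * (|γ (k + 1) - γ k| * w (k + 1)) + B * C * (γ k ^ 2 * w (k + 1) ^ 2) := by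
          ring
      _ ≤ _ := by gcongr; exact hww _
  have hγw : Tendsto (fun k => γ k * w k) atTop (𝓝 0) := by
    have h := hsq.tendsto_atTop_zero.sqrt
    simp only [← mul_pow, Real.sqrt_sq (mul_nonneg (hγ _) (hw0 _)), Real.sqrt_zero] at h
    exact h
  have hcX : Tendsto (fun n => ⟪c n, X n⟫) atTop (𝓝 0) := by
    refine squeeze_zero_norm (fun k => ?_) (by simpa using hγw.const_mul (A * C))
    calc ‖⟪c k, X k⟫‖ ≤ ‖c k‖ * ‖X k‖ := norm_inner_le_norm _ _
      _ ≤ (γ k * A) * (C * w k) := by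
          rw [norm_smul, Real.norm_eq_abs, abs_of_nonneg (hγ k)]
          exact mul_le_mul (mul_le_mul_of_nonneg_left (hv k) (hγ k)) (hX k) (norm_nonneg _)
            (mul_nonneg (hγ k) hA)
      _ = A * C * (γ k * w k) := by ring
  simp only [← real_inner_smul_left]
  exact exists_tendsto_sum_inner_sub c X
    (.of_nonneg_of_le (fun k => by positivity) hdc ((hvar.mul_left _).add (hsq'.mul_left _))) hcX

end Abel

section ConditionalLaw

variable {Ω α : Type*} {m m0 : MeasurableSpace Ω} [MeasurableSpace α] {μ : Measure Ω}
  {Y : Ω → α} {κ : Ω → Measure α}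

theorem aemeasurable_measure_apply_of_condExp_indicator [∀ ω, IsFiniteMeasure (κ ω)]
    (hm : m ≤ m0) {A : Set α}
    (hcond : μ[fun ω => A.indicator (fun _ => (1 : ℝ)) (Y ω) | m] =ᵐ[μ] fun ω => (κ ω A).toReal) :
    AEMeasurable (fun ω => κ ω A) μ := by
  have h := ENNReal.measurable_ofReal.comp_aemeasurable
    ((stronglyMeasurable_condExp.mono hm).aestronglyMeasurable.congr hcond).aemeasurable
  simpa only [Function.comp_def, ENNReal.ofReal_toReal (measure_ne_top _ _)] using h

theorem lintegral_measure_apply_of_condExp_indicator [IsFiniteMeasure μ]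
    [∀ ω, IsFiniteMeasure (κ ω)] (hm : m ≤ m0) (hY : Measurable Y) {A : Set α}
    (hA : MeasurableSet A)
    (hcond : μ[fun ω => A.indicator (fun _ => (1 : ℝ)) (Y ω) | m] =ᵐ[μ] fun ω => (κ ω A).toReal) :
    ∫⁻ ω, κ ω A ∂μ = μ (Y ⁻¹' A) := by
  have hint : Integrable (fun ω => (κ ω A).toReal) μ := integrable_condExp.congr hcond
  calc ∫⁻ ω, κ ω A ∂μ = ∫⁻ ω, ENNReal.ofReal (κ ω A).toReal ∂μ := by
        simp only [ENNReal.ofReal_toReal (measure_ne_top _ _)]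
    _ = ENNReal.ofReal (∫ ω, A.indicator (fun _ => (1 : ℝ)) (Y ω) ∂μ) := by
        rw [← ofReal_integral_eq_lintegral_ofReal hint (ae_of_all _ fun _ => ENNReal.toReal_nonneg),
          ← integral_congr_ae hcond, integral_condExp hm]
    _ = μ (Y ⁻¹' A) := by
        simp_rw [← Set.indicator_comp_right, Function.comp_def]
        rw [integral_indicator_const _ (hY hA), smul_eq_mul, mul_one, measureReal_def,
          ENNReal.ofReal_toReal (measure_ne_top _ _)]

theorem aemeasurable_lintegral_and_lintegral_lintegral_eq (hY : Measurable Y)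
    (hset : ∀ A, MeasurableSet A → AEMeasurable (fun ω => κ ω A) μ ∧ ∫⁻ ω, κ ω A ∂μ = μ (Y ⁻¹' A))
    {f : α → ℝ≥0∞} (hf : Measurable f) :
    AEMeasurable (fun ω => ∫⁻ x, f x ∂κ ω) μ ∧ ∫⁻ ω, ∫⁻ x, f x ∂κ ω ∂μ = ∫⁻ ω, f (Y ω) ∂μ := by
  -- `ω ↦ κ ω` need not be measurable, so measurability is carried along the induction
  refine Measurable.ennreal_induction ?indicator ?add ?iSup hf
  case indicator =>
    intro c A hA
    simp only [lintegral_indicator_const hA, ← Set.indicator_comp_right, Function.comp_def]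
    refine ⟨(hset A hA).1.const_mul c, ?_⟩
    rw [lintegral_const_mul'' c (hset A hA).1, (hset A hA).2,
      lintegral_indicator_const (hY hA)]
  case add =>
    intro f g _ hf hg ihf ihg
    simp only [Pi.add_apply, lintegral_add_left hf]
    refine ⟨ihf.1.add ihg.1, ?_⟩
    rw [lintegral_add_left' ihf.1, ihf.2, ihg.2]
    exact (lintegral_add_left (hf.comp hY) _).symm
  case iSup =>
    intro f hf hmono ih
    simp only [lintegral_iSup hf hmono]
    refine ⟨AEMeasurable.iSup fun n => (ih n).1, ?_⟩
    rw [lintegral_iSup' (fun n => (ih n).1)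
      (ae_of_all _ fun ω n k hnk => lintegral_mono (hmono hnk)), iSup_congr fun n => (ih n).2]
    exact (lintegral_iSup (fun n => (hf n).comp hY) fun n k hnk ω => hmono hnk (Y ω)).symm

end ConditionalLaw

theorem ENNReal.le_add_div_of_le_mul_add {u : ℕ → ℝ≥0∞} {a b : ℝ≥0∞} (ha : a < 1)
    (h : ∀ n, u (n + 1) ≤ a * u n + b) (n : ℕ) : u n ≤ u 0 + b / (1 - a) := by
  induction n with
  | zero => exact le_self_add
  | succ n ih =>
    have hfix : a * (b / (1 - a)) + b = b / (1 - a) := by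
      set c := b / (1 - a)
      have hb : (1 - a) * c = b :=
        ENNReal.mul_div_cancel (tsub_pos_of_lt ha).ne' (ENNReal.sub_ne_top ENNReal.one_ne_top)
      rw [← hb, ← add_mul, add_tsub_cancel_of_le ha.le, one_mul]
    calc u (n + 1) ≤ a * (u 0 + b / (1 - a)) + b := (h n).trans (by gcongr)
      _ = a * u 0 + b / (1 - a) := by rw [mul_add, add_assoc, hfix]
      _ ≤ u 0 + b / (1 - a) := by gcongr; exact mul_le_of_le_one_left' ha.le

theorem ae_summable_mul_of_lintegral_le {Ω : Type*} {mΩ : MeasurableSpace Ω} {μ : Measure Ω}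
    {u : ℕ → ℝ} (hu0 : ∀ j, 0 ≤ u j) (hu : Summable u) {Y : ℕ → Ω → ℝ}
    (hY0 : ∀ j ω, 0 ≤ Y j ω) (hYm : ∀ j, Measurable (Y j)) {M : ℝ≥0∞} (hM : M ≠ ∞)
    (hYM : ∀ j, ∫⁻ ω, ENNReal.ofReal (Y j ω) ∂μ ≤ M) :
    ∀ᵐ ω ∂μ, Summable fun j => u j * Y j ω := by
  have hm j : Measurable fun ω => ENNReal.ofReal (u j) * ENNReal.ofReal (Y j ω) :=
    (hYm j).ennreal_ofReal.const_mul _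
  have hfin : ∫⁻ ω, ∑' j, ENNReal.ofReal (u j) * ENNReal.ofReal (Y j ω) ∂μ ≠ ∞ := by
    rw [lintegral_tsum fun j => (hm j).aemeasurable]
    refine ne_top_of_le_ne_top (b := ∑' j, ENNReal.ofReal (u j) * M) ?_
      (ENNReal.tsum_le_tsum fun j => ?_)
    · rw [ENNReal.tsum_mul_right, ← ENNReal.ofReal_tsum_of_nonneg hu0 hu]
      exact ENNReal.mul_ne_top ENNReal.ofReal_ne_top hM
    · rw [lintegral_const_mul _ (hYm j).ennreal_ofReal]
      exact mul_le_mul_right (hYM j) _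
  filter_upwards [ae_lt_top (Measurable.tsum hm) hfin] with ω hω
  refine (ENNReal.summable_toReal hω.ne).congr fun j => ?_
  rw [ENNReal.toReal_mul, ENNReal.toReal_ofReal (hu0 j), ENNReal.toReal_ofReal (hY0 j ω)]

theorem lintegral_comp_le_add_div_of_drift {Ω α : Type*} {m0 : MeasurableSpace Ω}
    [MeasurableSpace α] {μ : Measure Ω} [IsProbabilityMeasure μ] {m : ℕ → MeasurableSpace Ω}
    (hm : ∀ k, m k ≤ m0) {Y : ℕ → Ω → α} (hY : ∀ k, Measurable (Y k))
    {κ : ℕ → Ω → Measure α} [∀ k ω, IsFiniteMeasure (κ k ω)]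
    (hcond : ∀ k A, MeasurableSet A →
      μ[fun ω => A.indicator (fun _ => (1 : ℝ)) (Y (k + 1) ω) | m k]
        =ᵐ[μ] fun ω => (κ k ω A).toReal)
    {V : α → ℝ≥0∞} (hV : Measurable V) {a b : ℝ≥0∞} (ha : a < 1)
    (hdrift : ∀ k ω, ∫⁻ x, V x ∂κ k ω ≤ a * V (Y k ω) + b) (k : ℕ) :
    ∫⁻ ω, V (Y k ω) ∂μ ≤ ∫⁻ ω, V (Y 0 ω) ∂μ + b / (1 - a) := by
  refine ENNReal.le_add_div_of_le_mul_add (u := fun k => ∫⁻ ω, V (Y k ω) ∂μ) ha (fun k => ?_) k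
  have htransfer := (aemeasurable_lintegral_and_lintegral_lintegral_eq (hY (k + 1)) (fun A hA =>
    ⟨aemeasurable_measure_apply_of_condExp_indicator (hm k) (hcond k A hA),
      lintegral_measure_apply_of_condExp_indicator (hm k) (hY (k + 1)) hA (hcond k A hA)⟩) hV).2
  calc ∫⁻ ω, V (Y (k + 1) ω) ∂μ = ∫⁻ ω, ∫⁻ x, V x ∂κ k ω ∂μ := htransfer.symm
    _ ≤ ∫⁻ ω, (a * V (Y k ω) + b) ∂μ := lintegral_mono (hdrift k)
    _ = a * ∫⁻ ω, V (Y k ω) ∂μ + b := by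
        rw [lintegral_add_right _ measurable_const,
          lintegral_const_mul (f := fun ω => V (Y k ω)) _ (hV.comp (hY k)), lintegral_const,
          measure_univ, mul_one]

theorem exists_lintegral_sq_le_of_drift {Ω α : Type*} {m0 : MeasurableSpace Ω}
    [MeasurableSpace α] {μ : Measure Ω} [IsProbabilityMeasure μ] {m : ℕ → MeasurableSpace Ω}
    (hm : ∀ k, m k ≤ m0) {Y : ℕ → Ω → α} (hY : ∀ k, Measurable (Y k))
    {κ : ℕ → Ω → Measure α} [∀ k ω, IsFiniteMeasure (κ k ω)]
    (hcond : ∀ k A, MeasurableSet A →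
      μ[fun ω => A.indicator (fun _ => (1 : ℝ)) (Y (k + 1) ω) | m k]
        =ᵐ[μ] fun ω => (κ k ω A).toReal)
    {W : α → ℝ} (hWm : Measurable W) (hW1 : ∀ x, 1 ≤ W x) {p lam b : ℝ} (hp : 2 ≤ p)
    (hlam : lam < 1)
    (hdrift : ∀ k ω, ∫⁻ x, ENNReal.ofReal (W x ^ p) ∂κ k ω
      ≤ ENNReal.ofReal (lam * W (Y k ω) ^ p + b))
    (h0 : ∫⁻ ω, ENNReal.ofReal (W (Y 0 ω) ^ p) ∂μ < ∞) :
    ∃ M ≠ ∞, ∀ k, ∫⁻ ω, ENNReal.ofReal (W (Y k ω) ^ 2) ∂μ ≤ M := by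
  have hlam' : ENNReal.ofReal lam < 1 := ENNReal.ofReal_lt_one.mpr hlam
  refine ⟨∫⁻ ω, ENNReal.ofReal (W (Y 0 ω) ^ p) ∂μ + ENNReal.ofReal b / (1 - ENNReal.ofReal lam),
    ENNReal.add_ne_top.mpr ⟨h0.ne, ENNReal.div_ne_top ENNReal.ofReal_ne_top
    (tsub_pos_of_lt hlam').ne'⟩, fun k => ?_⟩
  have hsq x : W x ^ 2 ≤ W x ^ p := by
    rw [← Real.rpow_two]; exact Real.rpow_le_rpow_of_exponent_le (hW1 x) hp
  refine (lintegral_mono fun ω => ENNReal.ofReal_le_ofReal (hsq _)).trans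
    (lintegral_comp_le_add_div_of_drift hm hY hcond (hWm.pow_const p).ennreal_ofReal hlam'
      (fun k ω => (hdrift k ω).trans ?_) k)
  rw [← ENNReal.ofReal_mul' (Real.rpow_nonneg (zero_le_one.trans (hW1 _)) p)]
  exact ENNReal.ofReal_add_le

theorem norm_apply_sub_apply_le_of_lipschitz {E F : Type*} [SeminormedAddCommGroup E]
    [SeminormedAddCommGroup F] [NormedSpace ℝ F] {Θ : Set E} {P : E → F →L[ℝ] F} {g : E → F}
    {μM MP C₀ L : ℝ} (hPnorm : ∀ θ ∈ Θ, ‖P θ‖ ≤ μM)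
    (hPlip : ∀ θ ∈ Θ, ∀ θ' ∈ Θ, ‖P θ - P θ'‖ ≤ MP * ‖θ - θ'‖) (hg : ∀ θ ∈ Θ, ‖g θ‖ ≤ C₀)
    (hglip : ∀ θ ∈ Θ, ∀ θ' ∈ Θ, ‖g θ - g θ'‖ ≤ L * ‖θ - θ'‖) {θ θ' : E} (hθ : θ ∈ Θ)
    (hθ' : θ' ∈ Θ) :
    ‖P θ' (g θ') - P θ (g θ)‖ ≤ (MP * C₀ + μM * L) * ‖θ' - θ‖ := by
  have hP := hPlip θ' hθ' θ hθ
  calc ‖P θ' (g θ') - P θ (g θ)‖ ≤ ‖P θ' - P θ‖ * ‖g θ'‖ + ‖P θ‖ * ‖g θ' - g θ‖ :=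
        ContinuousLinearMap.norm_apply_sub_apply_le _ _ _ _
    _ ≤ MP * ‖θ' - θ‖ * C₀ + μM * (L * ‖θ' - θ‖) := by
        gcongr
        · exact (norm_nonneg _).trans hP
        · exact hg θ' hθ'
        · exact (norm_nonneg _).trans (hPnorm θ hθ)
        · exact hPnorm θ hθ
        · exact hglip θ' hθ' θ hθ
    _ = (MP * C₀ + μM * L) * ‖θ' - θ‖ := by ring

theorem norm_le_mul_of_sub_eq_sub {E : Type*} [SeminormedAddCommGroup E] {x y u c : E}
    {w A B C : ℝ} (hxy : x - y = u - c) (hw : 1 ≤ w) (hC : 0 ≤ C) (hx : ‖x‖ ≤ A * w)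
    (hu : ‖u‖ ≤ B * w) (hc : ‖c‖ ≤ C) : ‖y‖ ≤ (A + B + C) * w := by
  rw [← sub_sub_cancel x y, hxy]
  calc ‖x - (u - c)‖ ≤ ‖x‖ + (‖u‖ + ‖c‖) :=
        (norm_sub_le _ _).trans (add_le_add le_rfl (norm_sub_le _ _))
    _ ≤ A * w + (B * w + C * w) := by
        gcongr
        exact hc.trans (le_mul_of_one_le_right hC hw)
    _ = (A + B + C) * w := by ring

theorem norm_sub_le_of_eq_sub_smul_apply {E : Type*} [SeminormedAddCommGroup E]
    [NormedSpace ℝ E] {θ θ' v : E} {A : E →L[ℝ] E} {γ μ B w : ℝ} (hγ : 0 ≤ γ) (hμ : 0 ≤ μ)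
    (hA : ‖A‖ ≤ μ) (hv : ‖v‖ ≤ B * w) (h : θ' = θ - γ • A v) : ‖θ' - θ‖ ≤ μ * B * (γ * w) := by
  rw [h, sub_sub_cancel_left, norm_neg, norm_smul, Real.norm_eq_abs, abs_of_nonneg hγ]
  calc γ * ‖A v‖ ≤ γ * (μ * (B * w)) :=
        mul_le_mul_of_nonneg_left ((A.le_opNorm v).trans (mul_le_mul hA hv (norm_nonneg _) hμ)) hγ
    _ = μ * B * (γ * w) := by ring

theorem remainder_series_converges_general
    {d : ℕ}
    {𝒵 : Type*} [MeasurableSpace 𝒵]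
    (Θ : Set (EuclideanSpace ℝ (Fin d)))
    (K : EuclideanSpace ℝ (Fin d) → Kernel 𝒵 𝒵)
    (hK : ∀ θ ∈ Θ, IsMarkovKernel (K θ))
    (H : EuclideanSpace ℝ (Fin d) → 𝒵 → EuclideanSpace ℝ (Fin d))
    (hbar : EuclideanSpace ℝ (Fin d) → EuclideanSpace ℝ (Fin d))
    (W : 𝒵 → ℝ) (hWmeas : Measurable W) (hW1 : ∀ z, 1 ≤ W z)
    (p lam b : ℝ) (hp : 2 ≤ p) (hlam1 : lam < 1)
    -- `sup_θ |H_θ|_W < ∞`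
    (hHbound : ∃ B : ℝ, ∀ θ ∈ Θ, ∀ z, ‖H θ z‖ ≤ B * W z)
    -- drift condition
    (hdrift : ∀ θ ∈ Θ, ∀ z,
      ∫⁻ z', ENNReal.ofReal (W z' ^ p) ∂(K θ z)
        ≤ ENNReal.ofReal (lam * W z ^ p + b))
    -- the preconditioner `P` : symmetric positive definite, eigenvalues in `[μm, μM]`
    (P : EuclideanSpace ℝ (Fin d) → (EuclideanSpace ℝ (Fin d) →L[ℝ] EuclideanSpace ℝ (Fin d)))
    (μm μM : ℝ) (hμm : 0 < μm) (hμmM : μm ≤ μM)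
    (hPsa : ∀ θ ∈ Θ, IsSelfAdjoint (P θ))
    (hPlb : ∀ θ ∈ Θ, ∀ v : EuclideanSpace ℝ (Fin d), μm * ‖v‖ ^ 2 ≤ ⟪v, P θ v⟫)
    (hPub : ∀ θ ∈ Θ, ∀ v : EuclideanSpace ℝ (Fin d), ⟪v, P θ v⟫ ≤ μM * ‖v‖ ^ 2)
    -- step sizes
    (γ : ℕ → ℝ) (hγ0 : ∀ k, 0 ≤ γ k)
    (hγsq : Summable fun k => γ k ^ 2)
    -- the algorithm
    {Ω : Type*} {m0 : MeasurableSpace Ω} {μ : Measure Ω} [IsProbabilityMeasure μ]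
    (𝔉 : Filtration ℕ m0)
    (Z : ℕ → Ω → 𝒵) (hZmeas : ∀ k, Measurable[𝔉 k] (Z k))
    (θ : ℕ → Ω → EuclideanSpace ℝ (Fin d))
    (hθΘ : ∀ k ω, θ k ω ∈ Θ)
    (hZ0 : ∫⁻ ω, ENNReal.ofReal (W (Z 0 ω) ^ p) ∂μ < ⊤)
    -- the conditional law of `Z^{k+1}` given `𝔉_k` is `Π_{θ_k}(Z^k, ·)`
    (hcond : ∀ k, ∀ A : Set 𝒵, MeasurableSet A →
      (μ[fun ω => A.indicator (fun _ => (1:ℝ)) (Z (k + 1) ω) | 𝔉 k])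
        =ᵐ[μ] fun ω => ((K (θ k ω)) (Z k ω) A).toReal)
    (hrec : ∀ k ω, θ (k + 1) ω = θ k ω - γ k • P (θ k ω) (H (θ k ω) (Z (k + 1) ω)))
    -- the solution `Ĥ` of the Poisson equation
    (Hhat : EuclideanSpace ℝ (Fin d) → 𝒵 → EuclideanSpace ℝ (Fin d))
    (hHhatbound : ∃ B : ℝ, ∀ θ' ∈ Θ, ∀ z, ‖Hhat θ' z‖ ≤ B * W z)
    (hpoisson : ∀ θ' ∈ Θ, ∀ z,
      Hhat θ' z - (∫ z', Hhat θ' z' ∂(K θ' z)) = H θ' z - hbar θ')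
    -- `h̄` is bounded on `Θ`
    (C₀ : ℝ) (hC₀ : 0 < C₀) (hbarbound : ∀ θ' ∈ Θ, ‖hbar θ'‖ ≤ C₀)
    (hγvar : Summable fun k => |γ (k + 1) - γ k|)
    (MP : ℝ) (hMP : 0 < MP)
    (hPlip : ∀ θ' ∈ Θ, ∀ θ'' ∈ Θ, ‖P θ' - P θ''‖ ≤ MP * ‖θ' - θ''‖)
    -- `h̄` is Lipschitz on `Θ`
    (L : ℝ) (hL : 0 < L)
    (hbarlip : ∀ θ' ∈ Θ, ∀ θ'' ∈ Θ, ‖hbar θ' - hbar θ''‖ ≤ L * ‖θ' - θ''‖) :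
    ∀ᵐ ω ∂μ, ∃ s : ℝ, Tendsto
      (fun n => ∑ k ∈ range n,
        γ k * ⟪hbar (θ k ω),
          P (θ k ω) ((∫ z', Hhat (θ k ω) z' ∂(K (θ k ω) (Z k ω)))
            - ∫ z', Hhat (θ (k + 1) ω) z' ∂(K (θ (k + 1) ω) (Z (k + 1) ω)))⟫)
      atTop (nhds s) := by
  have hκ : ∀ k ω, IsMarkovKernel (K (θ k ω)) := fun k ω => hK _ (hθΘ k ω)
  obtain ⟨BH, hBH⟩ := hHbound
  obtain ⟨BHh, hBHh⟩ := hHhatbound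
  have hμM : 0 ≤ μM := hμm.le.trans hμmM
  have hPnorm : ∀ θ' ∈ Θ, ‖P θ'‖ ≤ μM := fun θ' h =>
    (P θ').opNorm_le_of_inner_map_self_le (hPsa θ' h).isSymmetric hμM
      (fun v => (by positivity : 0 ≤ μm * ‖v‖ ^ 2).trans (hPlb θ' h v)) (hPub θ' h)
  have hZm : ∀ k, Measurable (Z k) := fun k => (hZmeas k).mono (𝔉.le k) le_rfl
  obtain ⟨M, hM, hmom⟩ := exists_lintegral_sq_le_of_drift 𝔉.le hZm hcond hWmeas hW1 hp hlam1
    (fun k ω => hdrift _ (hθΘ k ω) _) hZ0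
  have hWZm : ∀ k, Measurable fun ω => W (Z k ω) ^ 2 := fun k => (hWmeas.comp (hZm k)).pow_const 2
  filter_upwards [ae_summable_mul_of_lintegral_le (fun k => sq_nonneg (γ k)) hγsq
      (fun k ω => sq_nonneg (W (Z k ω))) hWZm hM hmom,
    ae_summable_mul_of_lintegral_le (fun k => sq_nonneg (γ k)) hγsq
      (fun k ω => sq_nonneg (W (Z (k + 1) ω))) (fun k => hWZm (k + 1)) hM (fun k => hmom (k + 1)),
    ae_summable_mul_of_lintegral_le (fun k => abs_nonneg (γ (k + 1) - γ k)) hγvar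
      (fun k ω => sq_nonneg (W (Z (k + 1) ω))) (fun k => hWZm (k + 1)) hM (fun k => hmom (k + 1))]
    with ω hsq hsq' hvar
  have hstep k : ‖θ (k + 1) ω - θ k ω‖ ≤ μM * BH * (γ k * W (Z (k + 1) ω)) :=
    norm_sub_le_of_eq_sub_smul_apply (hγ0 k) hμM (hPnorm _ (hθΘ k ω)) (hBH _ (hθΘ k ω) _)
      (hrec k ω)
  obtain ⟨s, hs⟩ := exists_tendsto_sum_smul_inner_sub γ hγ0
    (fun k => P (θ k ω) (hbar (θ k ω))) (fun k => ∫ z', Hhat (θ k ω) z' ∂(K (θ k ω) (Z k ω)))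
    (fun k => W (Z k ω)) (fun k => hW1 _)
    (fun k => ((P _).le_opNorm _).trans
      (mul_le_mul (hPnorm _ (hθΘ k ω)) (hbarbound _ (hθΘ k ω)) (norm_nonneg _) hμM))
    (fun k => (norm_apply_sub_apply_le_of_lipschitz hPnorm hPlip hbarbound hbarlip (hθΘ k ω)
      (hθΘ (k + 1) ω)).trans (by
        rw [mul_assoc _ (μM * BH)]
        exact mul_le_mul_of_nonneg_left (hstep k) (by positivity)))
    (fun k => norm_le_mul_of_sub_eq_sub (hpoisson _ (hθΘ k ω) _) (hW1 _) hC₀.le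
      (hBHh _ (hθΘ k ω) _) (hBH _ (hθΘ k ω) _) (hbarbound _ (hθΘ k ω)))
    hsq hsq' hvar
  refine ⟨s, hs.congr fun n => sum_congr rfl fun k _ => ?_⟩
  exact congrArg (γ k * ·) ((hPsa _ (hθΘ k ω)).isSymmetric _ _)

/-- Control of the `R_k` part, via Abel transformation, in the proof of Lemma 3: the series
`∑_k γ_k ⟨h̄(θ_k), P(θ_k) R_k⟩` with
`R_k = (Π_{θ_k}Ĥ_{θ_k})(Z^k) − (Π_{θ_{k+1}}Ĥ_{θ_{k+1}})(Z^{k+1})` converges almost surely. -/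
theorem remainder_series_converges
    {d : ℕ} (hd : 1 ≤ d)
    {𝒵 : Type*} [MeasurableSpace 𝒵]
    (Θ : Set (EuclideanSpace ℝ (Fin d))) (hΘ : Bornology.IsBounded Θ)
    (K : EuclideanSpace ℝ (Fin d) → Kernel 𝒵 𝒵)
    (hK : ∀ θ ∈ Θ, IsMarkovKernel (K θ))
    (π : EuclideanSpace ℝ (Fin d) → Measure 𝒵)
    (hπ : ∀ θ ∈ Θ, IsProbabilityMeasure (π θ))
    (hinv : ∀ θ ∈ Θ, (π θ).bind (K θ) = π θ)
    (H : EuclideanSpace ℝ (Fin d) → 𝒵 → EuclideanSpace ℝ (Fin d))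
    (hHmeas : Measurable (Function.uncurry H))
    -- `h̄(θ) = ∫ H_θ dπ_θ`
    (hbar : EuclideanSpace ℝ (Fin d) → EuclideanSpace ℝ (Fin d))
    (hhbar : ∀ θ, hbar θ = ∫ z, H θ z ∂(π θ))
    (W : 𝒵 → ℝ) (hWmeas : Measurable W) (hW1 : ∀ z, 1 ≤ W z)
    (p lam b : ℝ) (hp : 2 ≤ p) (hlam0 : 0 < lam) (hlam1 : lam < 1) (hb : 0 < b)
    -- `sup_θ |H_θ|_W < ∞`
    (hHbound : ∃ B : ℝ, ∀ θ ∈ Θ, ∀ z, ‖H θ z‖ ≤ B * W z)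
    -- drift condition
    (hdrift : ∀ θ ∈ Θ, ∀ z,
      ∫⁻ z', ENNReal.ofReal (W z' ^ p) ∂(K θ z)
        ≤ ENNReal.ofReal (lam * W z ^ p + b))
    -- the preconditioner `P` : symmetric positive definite, eigenvalues in `[μm, μM]`
    (P : EuclideanSpace ℝ (Fin d) → (EuclideanSpace ℝ (Fin d) →L[ℝ] EuclideanSpace ℝ (Fin d)))
    (μm μM : ℝ) (hμm : 0 < μm) (hμmM : μm ≤ μM)
    (hPsa : ∀ θ ∈ Θ, IsSelfAdjoint (P θ))
    (hPlb : ∀ θ ∈ Θ, ∀ v : EuclideanSpace ℝ (Fin d), μm * ‖v‖ ^ 2 ≤ ⟪v, P θ v⟫)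
    (hPub : ∀ θ ∈ Θ, ∀ v : EuclideanSpace ℝ (Fin d), ⟪v, P θ v⟫ ≤ μM * ‖v‖ ^ 2)
    -- step sizes
    (γ : ℕ → ℝ) (hγ0 : ∀ k, 0 ≤ γ k) (hγ1 : ∀ k, γ k ≤ 1)
    (hγsq : Summable fun k => γ k ^ 2)
    -- the algorithm
    {Ω : Type*} {m0 : MeasurableSpace Ω} {μ : Measure Ω} [IsProbabilityMeasure μ]
    (𝔉 : Filtration ℕ m0)
    (Z : ℕ → Ω → 𝒵) (hZmeas : ∀ k, Measurable[𝔉 k] (Z k))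
    (θ : ℕ → Ω → EuclideanSpace ℝ (Fin d))
    (hθmeas : ∀ k, Measurable[𝔉 k] (θ k))
    (hθΘ : ∀ k ω, θ k ω ∈ Θ)
    (θ₀ : EuclideanSpace ℝ (Fin d)) (hθ0 : ∀ ω, θ 0 ω = θ₀)
    (hZ0 : ∫⁻ ω, ENNReal.ofReal (W (Z 0 ω) ^ p) ∂μ < ⊤)
    -- the conditional law of `Z^{k+1}` given `𝔉_k` is `Π_{θ_k}(Z^k, ·)`
    (hcond : ∀ k, ∀ A : Set 𝒵, MeasurableSet A →
      (μ[fun ω => A.indicator (fun _ => (1:ℝ)) (Z (k + 1) ω) | 𝔉 k])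
        =ᵐ[μ] fun ω => ((K (θ k ω)) (Z k ω) A).toReal)
    (hrec : ∀ k ω, θ (k + 1) ω = θ k ω - γ k • P (θ k ω) (H (θ k ω) (Z (k + 1) ω)))
    -- the solution `Ĥ` of the Poisson equation
    (Hhat : EuclideanSpace ℝ (Fin d) → 𝒵 → EuclideanSpace ℝ (Fin d))
    (hHhatmeas : Measurable (Function.uncurry Hhat))
    (hHhatbound : ∃ B : ℝ, ∀ θ' ∈ Θ, ∀ z, ‖Hhat θ' z‖ ≤ B * W z)
    (hpoisson : ∀ θ' ∈ Θ, ∀ z,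
      Hhat θ' z - (∫ z', Hhat θ' z' ∂(K θ' z)) = H θ' z - hbar θ')
    -- `h̄` is bounded on `Θ`
    (C₀ : ℝ) (hC₀ : 0 < C₀) (hbarbound : ∀ θ' ∈ Θ, ‖hbar θ'‖ ≤ C₀)
    (hγvar : Summable fun k => |γ (k + 1) - γ k|)
    (MP : ℝ) (hMP : 0 < MP)
    (hPlip : ∀ θ' ∈ Θ, ∀ θ'' ∈ Θ, ‖P θ' - P θ''‖ ≤ MP * ‖θ' - θ''‖)
    -- Lipschitz regularity of `Π Ĥ`
    (CP : ℝ) (hCP : 0 < CP)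
    (hPihatlip : ∀ θ' ∈ Θ, ∀ θ'' ∈ Θ, ∀ z,
      ‖(∫ z', Hhat θ' z' ∂(K θ' z)) - ∫ z', Hhat θ'' z' ∂(K θ'' z)‖
        ≤ CP * ‖θ' - θ''‖ * W z)
    -- `h̄` is Lipschitz on `Θ`
    (L : ℝ) (hL : 0 < L)
    (hbarlip : ∀ θ' ∈ Θ, ∀ θ'' ∈ Θ, ‖hbar θ' - hbar θ''‖ ≤ L * ‖θ' - θ''‖) :
    ∀ᵐ ω ∂μ, ∃ s : ℝ, Tendsto
      (fun n => ∑ k ∈ range n,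
        γ k * ⟪hbar (θ k ω),
          P (θ k ω) ((∫ z', Hhat (θ k ω) z' ∂(K (θ k ω) (Z k ω)))
            - ∫ z', Hhat (θ (k + 1) ω) z' ∂(K (θ (k + 1) ω) (Z (k + 1) ω)))⟫)
      atTop (nhds s) :=
  remainder_series_converges_general Θ K hK H hbar W hWmeas hW1 p lam b hp hlam1 hHbound hdrift P μm
    μM hμm hμmM hPsa hPlb hPub γ hγ0 hγsq 𝔉 Z hZmeas θ hθΘ hZ0 hcond hrec Hhat hHhatbound hpoisson
    C₀ hC₀ hbarbound hγvar MP hMP hPlip L hL hbarlip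
end
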